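/- For every integer m ≥ 0 and every nonzero complex number λ, ∫_{-1}^1 e^{-iλx} P_m(x) dx = ∑_{n=1}^{m+1} β_n^m [e^{iλ}/(iλ)^n + (-1)^{m+n} e^{-iλ}/(iλ)^n], where the coefficients β_n^m are: β_1^m = 1 when m is even; for n ≡ m+1 (mod 2) with 2 ≤ n ≤ m+1 (and n ≥ 3 if m even), β_n^m = ((m+n) C((m+n-3)/2, n-1) + C((m+n-3)/2, n-2)) R_{(m-n+3)/2, (m+n-3)/2}(m); and for n ≡ m (mod 2) with 1 ≤ n ≤ m, β_n^m = -C((m+n)/2 - 1, n-1) R_{(m-n)/2 + 1, (m+n)/2 - 1}(m); here R_{s,t}(r) = ∏_{k=s}^t (2(r-k)+1) for s ≤ t and 1 otherwise, and C(s,t) = 0 when s < t. -/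

import Mathlib

open MeasureTheory Polynomial Finset

/-- The Legendre polynomial `P_m(x) = (1/(2^m m!)) dᵐ/dxᵐ ((x²-1)^m)`. -/
noncomputable def legendre (m : ℕ) : Polynomial ℝ :=
  Polynomial.C (1 / (2^m * (m.factorial : ℝ))) * derivative^[m] ((X^2 - 1)^m)

/-- `R_{s,t}(r) = ∏_{k=s}^t (2(r-k)+1)`, an empty product being `1`. -/
noncomputable def Rst (s t r : ℕ) : ℂ :=
  ∏ k ∈ Finset.Icc s t, (2 * ((r:ℂ) - (k:ℂ)) + 1)

/-- The coefficients `β_n^m` in the finite Fourier transform of the Legendre polynomials. -/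
noncomputable def betaCoeff (m n : ℕ) : ℂ :=
  if n % 2 = m % 2 then
    -- `n` has the same parity as `m` (with `1 ≤ n ≤ m`): formula (7L)
    -(((m + n) / 2 - 1).choose (n - 1) : ℂ) * Rst ((m - n) / 2 + 1) ((m + n) / 2 - 1) m
  else if n = 1 then
    -- `m` even, `n = 1`: formula (5L)
    1
  else
    -- `n` of parity opposite to `m` with `2 ≤ n ≤ m + 1`: formula (6L)
    (((m:ℂ) + (n:ℂ)) * (((m + n - 3) / 2).choose (n - 1) : ℂ)
        + (((m + n - 3) / 2).choose (n - 2) : ℂ)) *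
      Rst ((m - n + 3) / 2) ((m + n - 3) / 2) m

/-!
Integrating by parts until the polynomial is exhausted gives, for `μ ≠ 0`,
`∫_{-1}^1 e^{-μx} p(x) dx = ∑_k (e^{μ} p⁽ᵏ⁾(-1) - e^{-μ} p⁽ᵏ⁾(1)) / μ^{k+1}`.
For `p = P_m`, Rodrigues' formula and the Leibniz rule applied to `(x - 1)^m (x + 1)^m` give
`P_m⁽ᵏ⁾(1) = (m+k)! / (2^k k! (m-k)!)`, and `P_m⁽ᵏ⁾(-1) = (-1)^{m+k} P_m⁽ᵏ⁾(1)` because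
`(x² - 1)^m` is even. What remains is `β_{k+1}^m = (-1)^{m+k} P_m⁽ᵏ⁾(1)`: writing `R` as a product
of consecutive odd numbers turns each parity case of `β` into a factorial identity.
-/

open Nat

section ExpIntegral

variable {μ : ℂ} (p : ℝ[X]) {n : ℕ}

theorem mul_sum_iterate_derivative_sub_sum (hμ : μ ≠ 0) (hn : p.natDegree ≤ n) (x : ℝ) :
    μ * ∑ k ∈ range (n + 1), (((derivative^[k] p).eval x : ℝ) : ℂ) / μ ^ (k + 1)
      - ∑ k ∈ range (n + 1), (((derivative^[k + 1] p).eval x : ℝ) : ℂ) / μ ^ (k + 1) =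
        ((p.eval x : ℝ) : ℂ) := by
  have htop : derivative^[n + 1] p = 0 := iterate_derivative_eq_zero (by omega)
  have htel := sum_range_sub' (fun k => (((derivative^[k] p).eval x : ℝ) : ℂ) / μ ^ k) (n + 1)
  simp only [htop, Function.iterate_zero_apply, eval_zero, Complex.ofReal_zero, zero_div,
    pow_zero, div_one, sub_zero] at htel
  rw [← htel, mul_sum, ← sum_sub_distrib]
  refine sum_congr rfl fun k _ => ?_
  rw [Function.iterate_succ_apply', pow_succ]
  field_simp

theorem hasDerivAt_exp_mul_sum_iterate_derivative (hμ : μ ≠ 0) (hn : p.natDegree ≤ n) (x : ℝ) :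
    HasDerivAt (fun x : ℝ => -Complex.exp (-μ * x) *
        ∑ k ∈ range (n + 1), (((derivative^[k] p).eval x : ℝ) : ℂ) / μ ^ (k + 1))
      (Complex.exp (-μ * x) * ((p.eval x : ℝ) : ℂ)) x := by
  have hexp : HasDerivAt (fun x : ℝ => Complex.exp (-μ * x)) (Complex.exp (-μ * x) * -μ) x := by
    simpa using ((hasDerivAt_id (x : ℂ)).const_mul (-μ)).cexp.comp_ofReal
  have hsum : HasDerivAt
      (fun x : ℝ => ∑ k ∈ range (n + 1), (((derivative^[k] p).eval x : ℝ) : ℂ) / μ ^ (k + 1))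
      (∑ k ∈ range (n + 1), (((derivative^[k + 1] p).eval x : ℝ) : ℂ) / μ ^ (k + 1)) x := by
    refine HasDerivAt.fun_sum fun k _ => ?_
    rw [Function.iterate_succ_apply']
    exact ((derivative^[k] p).hasDerivAt x).ofReal_comp.div_const _
  refine (hexp.fun_neg.fun_mul hsum).congr_deriv ?_
  rw [← mul_sum_iterate_derivative_sub_sum p hμ hn x]
  ring

theorem integral_exp_mul_eval (hμ : μ ≠ 0) (hn : p.natDegree ≤ n) (a b : ℝ) :
    ∫ x in a..b, Complex.exp (-μ * x) * ((p.eval x : ℝ) : ℂ) =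
      ∑ k ∈ range (n + 1), (Complex.exp (-μ * a) * (((derivative^[k] p).eval a : ℝ) : ℂ)
        - Complex.exp (-μ * b) * (((derivative^[k] p).eval b : ℝ) : ℂ)) / μ ^ (k + 1) := by
  have hcont : Continuous fun x : ℝ => Complex.exp (-μ * x) * ((p.eval x : ℝ) : ℂ) := by fun_prop
  rw [intervalIntegral.integral_eq_sub_of_hasDerivAt
    (fun x _ => hasDerivAt_exp_mul_sum_iterate_derivative p hμ hn x) (hcont.intervalIntegrable a b)]
  simp only [mul_sum, ← sum_sub_distrib, sub_div]
  refine sum_congr rfl fun k _ => ?_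
  ring

end ExpIntegral

section IterateDerivative

variable {R : Type*} [CommRing R]

theorem iterate_derivative_comp_neg_X (p : R[X]) (k : ℕ) :
    derivative^[k] (p.comp (-X)) = (-1) ^ k * (derivative^[k] p).comp (-X) := by
  induction k generalizing p with
  | zero => simp
  | succ k ih => simp [ih (derivative p), derivative_comp, pow_succ]

theorem eval_neg_iterate_derivative_of_comp_neg_X_eq {q : R[X]} (hq : q.comp (-X) = q)
    (j : ℕ) (x : R) :
    (derivative^[j] q).eval (-x) = (-1) ^ j * (derivative^[j] q).eval x := by
  conv_rhs => rw [← hq, iterate_derivative_comp_neg_X]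
  simp [eval_comp, ← mul_assoc, ← mul_pow]

theorem eval_iterate_derivative_X_sub_C_pow (a : R) (m j : ℕ) :
    (derivative^[j] ((X - C a) ^ m)).eval a = if j = m then (m ! : R) else 0 := by
  rw [iterate_derivative_X_sub_pow]
  split_ifs with hjm
  · simp [hjm, Nat.descFactorial_self]
  · rcases lt_or_gt_of_ne hjm with hlt | hgt
    · simp [zero_pow (Nat.sub_ne_zero_of_lt hlt)]
    · simp [Nat.descFactorial_eq_zero_iff_lt.2 hgt]

/-- Leibniz: only the term differentiating `(X - a) ^ m` exactly `m` times survives at `a`. -/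
theorem eval_iterate_derivative_X_sub_C_pow_mul (a : R) (q : R[X]) (m k : ℕ) :
    (derivative^[m + k] ((X - C a) ^ m * q)).eval a =
      ((m + k).choose k * m ! : R) * (derivative^[k] q).eval a := by
  rw [iterate_derivative_mul, eval_finsetSum, sum_eq_single k]
  · simp [eval_iterate_derivative_X_sub_C_pow, mul_assoc]
  · intro i hi hik
    have : m + k - i ≠ m := by simp at hi; omega
    simp [eval_iterate_derivative_X_sub_C_pow, this]
  · intro hk
    simp at hk

end IterateDerivative

theorem natDegree_legendre_le (m : ℕ) : (legendre m).natDegree ≤ m := by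
  have hsq : ((X : ℝ[X]) ^ 2 - 1).natDegree ≤ 2 := by compute_degree!
  unfold legendre
  refine (natDegree_C_mul_le _ _).trans ((natDegree_iterate_derivative _ _).trans ?_)
  have hpow := natDegree_pow_le_of_le m hsq
  omega

theorem iterate_derivative_legendre (m k : ℕ) :
    derivative^[k] (legendre m) =
      C (1 / (2 ^ m * (m ! : ℝ))) * derivative^[m + k] ((X ^ 2 - 1) ^ m) := by
  rw [legendre, iterate_derivative_C_mul, add_comm, Function.iterate_add_apply]

theorem legendre_iterate_derivative_eval_neg_one (m k : ℕ) :
    (derivative^[k] (legendre m)).eval (-1) =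
      (-1) ^ (m + k) * (derivative^[k] (legendre m)).eval 1 := by
  have heven : (((X : ℝ[X]) ^ 2 - 1) ^ m).comp (-X) = ((X : ℝ[X]) ^ 2 - 1) ^ m := by simp
  simp only [iterate_derivative_legendre, eval_mul, eval_C,
    eval_neg_iterate_derivative_of_comp_neg_X_eq heven]
  ring

theorem legendre_iterate_derivative_eval_one {m k : ℕ} (hk : k ≤ m) :
    (derivative^[k] (legendre m)).eval 1 = (m + k)! / (2 ^ k * k ! * (m - k)!) := by
  have hfactor : ((X : ℝ[X]) ^ 2 - 1) ^ m = (X - C 1) ^ m * (X + C 1) ^ m := by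
    rw [← mul_pow, C_1]; ring
  have hchoose : ((m + k).choose k * m ! * k ! : ℝ) = (m + k)! := by
    exact_mod_cast Nat.add_choose_mul_factorial_mul_factorial m k
  have hdesc : ((m - k)! * m.descFactorial k : ℝ) = m ! := by
    exact_mod_cast Nat.factorial_mul_descFactorial hk
  have hpow : (2 : ℝ) ^ (m - k) * 2 ^ k = 2 ^ m := by
    rw [← pow_add, Nat.sub_add_cancel hk]
  rw [iterate_derivative_legendre, hfactor, eval_mul, eval_C,
    eval_iterate_derivative_X_sub_C_pow_mul, iterate_derivative_X_add_pow,
    eq_div_iff (by positivity)]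
  simp only [nsmul_eq_mul, eval_mul, eval_natCast, eval_pow, eval_add, eval_X, eval_C,
    one_add_one_eq_two]
  rw [← hchoose, ← hdesc, ← hpow]
  field_simp

theorem prod_Icc_two_mul_add_one_mul_doubleFactorial {a b : ℕ} (h : a ≤ b) :
    (∏ j ∈ Icc (a + 1) b, (2 * j + 1)) * (2 * a + 1)‼ = (2 * b + 1)‼ := by
  induction b, h using Nat.le_induction with
  | base => simp
  | succ b hab ih =>
    rw [prod_Icc_succ_top (by omega), mul_right_comm, ih, mul_comm,
      show 2 * (b + 1) + 1 = 2 * b + 1 + 2 by ring, doubleFactorial_add_two]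

theorem factorial_two_mul_add_one (b : ℕ) : (2 * b + 1)! = (2 * b + 1)‼ * (2 ^ b * b !) := by
  rw [factorial_eq_mul_doubleFactorial, doubleFactorial_two_mul]

theorem choose_mul_prod_Icc_two_mul_add_one (a d : ℕ) :
    (d + a).choose d * (∏ j ∈ Icc (a + 1) (d + a), (2 * j + 1)) * (2 ^ d * d ! * (2 * a + 1)!) =
      (2 * (d + a) + 1)! := by
  rw [factorial_two_mul_add_one, factorial_two_mul_add_one,
    ← prod_Icc_two_mul_add_one_mul_doubleFactorial (le_add_self : a ≤ d + a),
    ← Nat.add_choose_mul_factorial_mul_factorial, Nat.choose_symm_add]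
  ring

theorem two_mul_add_three_mul_choose_add_choose (a d : ℕ) :
    (2 * d + 2 * a + 3) * (d + a).choose (d + 1) + (d + a).choose d =
      (2 * a + 1) * (d + a + 1).choose (d + 1) := by
  have hsucc := Nat.choose_succ_right_eq (d + a) d
  rw [Nat.add_sub_cancel_left] at hsucc
  rw [Nat.choose_succ_succ]
  linear_combination 2 * hsucc

theorem Rst_eq_prod_Icc {s t m : ℕ} (hs : s ≤ m) (ht : t ≤ m) :
    Rst s t m = ∏ j ∈ Icc (m - t) (m - s), (2 * (j : ℂ) + 1) := by
  refine prod_nbij' (m - ·) (m - ·) ?_ ?_ ?_ ?_ ?_ <;> intro k hk <;> simp only [mem_Icc] at hk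
  · simp only [mem_Icc]; omega
  · simp only [mem_Icc]; omega
  · omega
  · omega
  · rw [Nat.cast_sub (by omega)]

theorem betaCoeff_same_parity (a d : ℕ) :
    betaCoeff (d + 1 + 2 * a) (d + 1) =
      -((d + a).choose d * ∏ j ∈ Icc (a + 1) (d + a), (2 * (j : ℂ) + 1)) := by
  rw [betaCoeff, if_pos (by omega), Rst_eq_prod_Icc (by omega) (by omega),
    show (d + 1 + 2 * a + (d + 1)) / 2 - 1 = d + a by omega,
    show (d + 1 + 2 * a - (d + 1)) / 2 + 1 = a + 1 by omega,
    show d + 1 + 2 * a - (d + a) = a + 1 by omega, show d + 1 + 2 * a - (a + 1) = d + a by omega,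
    Nat.add_sub_cancel, neg_mul]

theorem betaCoeff_opposite_parity (a d : ℕ) :
    betaCoeff (d + 1 + 2 * a) (d + 2) =
      (2 * a + 1) * (d + a + 1).choose (d + 1) * ∏ j ∈ Icc (a + 1) (d + a), (2 * (j : ℂ) + 1) := by
  rw [betaCoeff, if_neg (by omega), if_neg (by omega), Rst_eq_prod_Icc (by omega) (by omega),
    show (d + 1 + 2 * a + (d + 2) - 3) / 2 = d + a by omega,
    show (d + 1 + 2 * a - (d + 2) + 3) / 2 = a + 1 by omega,
    show d + 1 + 2 * a - (d + a) = a + 1 by omega, show d + 1 + 2 * a - (a + 1) = d + a by omega,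
    show d + 2 - 1 = d + 1 by omega, show d + 2 - 2 = d by omega]
  rw [← Nat.cast_add, show d + 1 + 2 * a + (d + 2) = 2 * d + 2 * a + 3 by ring]
  congr 1
  exact_mod_cast two_mul_add_three_mul_choose_add_choose a d

theorem choose_succ_mul_prod_Icc_two_mul_add_one (a d : ℕ) :
    (2 * a + 1) * (d + a + 1).choose (d + 1) * (∏ j ∈ Icc (a + 1) (d + a), (2 * j + 1)) *
      (2 ^ (d + 1) * (d + 1)! * (2 * a)!) = (2 * (d + a) + 2)! := by
  have hchoose := Nat.add_one_mul_choose_eq (d + a) d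
  rw [show 2 * (d + a) + 2 = 2 * (d + a) + 1 + 1 by ring, factorial_succ, factorial_succ,
    ← choose_mul_prod_Icc_two_mul_add_one, factorial_succ (2 * a)]
  linear_combination (2 * (2 * a + 1) * 2 ^ d * d ! * (2 * a)! *
    ∏ j ∈ Icc (a + 1) (d + a), (2 * j + 1)) * hchoose.symm

theorem betaCoeff_succ {m k : ℕ} (hk : k ≤ m) :
    betaCoeff m (k + 1) = (-1) ^ (m + k) * (m + k)! / (2 ^ k * k ! * (m - k)!) := by
  rw [eq_div_iff (by simp [Nat.factorial_ne_zero])]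
  obtain ⟨a, ha | ha⟩ := Nat.even_or_odd' (m - k)
  · cases k with
    | zero =>
      rw [betaCoeff, if_neg (by omega), if_pos rfl]
      simp [show m = 2 * a by omega, pow_mul]
    | succ d =>
      obtain rfl : m = d + 1 + 2 * a := by omega
      rw [betaCoeff_opposite_parity, show d + 1 + 2 * a - (d + 1) = 2 * a by omega,
        show d + 1 + 2 * a + (d + 1) = 2 * (d + a) + 2 by ring,
        (show Even (2 * (d + a) + 2) from ⟨d + a + 1, by ring⟩).neg_one_pow, one_mul]
      exact_mod_cast choose_succ_mul_prod_Icc_two_mul_add_one a d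
  · obtain rfl : m = k + 1 + 2 * a := by omega
    rw [betaCoeff_same_parity, show k + 1 + 2 * a - k = 2 * a + 1 by omega,
      show k + 1 + 2 * a + k = 2 * (k + a) + 1 by ring,
      (show Odd (2 * (k + a) + 1) from ⟨k + a, rfl⟩).neg_one_pow, neg_mul, neg_one_mul, neg_inj]
    exact_mod_cast choose_mul_prod_Icc_two_mul_add_one a k

theorem betaCoeff_succ_eq_legendre {m k : ℕ} (hk : k ≤ m) :
    betaCoeff m (k + 1) = (-1) ^ (m + k) * (((derivative^[k] (legendre m)).eval 1 : ℝ) : ℂ) := by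
  rw [betaCoeff_succ hk, legendre_iterate_derivative_eval_one hk]
  push_cast
  ring

/-- Explicit formula for the finite Fourier transform of the Legendre polynomials. -/
theorem legendre_fourier (m : ℕ) (l : ℂ) (hl : l ≠ 0) :
    (∫ x in (-1:ℝ)..1, Complex.exp (-Complex.I * l * x) * (((legendre m).eval x : ℝ) : ℂ)) =
      ∑ n ∈ Finset.Icc 1 (m + 1), betaCoeff m n *
        (Complex.exp (Complex.I * l) / (Complex.I * l)^n
          + (-1:ℂ)^(m+n) * Complex.exp (-Complex.I * l) / (Complex.I * l)^n) := by
  have hμ : Complex.I * l ≠ 0 := mul_ne_zero Complex.I_ne_zero hl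
  have hreindex (f : ℕ → ℂ) : ∑ n ∈ Icc 1 (m + 1), f n = ∑ k ∈ range (m + 1), f (k + 1) := by
    rw [range_eq_Ico, sum_Ico_add', zero_add, Ico_add_one_right_eq_Icc]
  rw [show -Complex.I * l = -(Complex.I * l) by ring,
    integral_exp_mul_eval (legendre m) hμ (natDegree_legendre_le m), hreindex]
  refine sum_congr rfl fun k hk => ?_
  have hkm : k ≤ m := Nat.lt_succ_iff.mp (mem_range.mp hk)
  have hsign : ((-1 : ℂ) ^ (m + k)) ^ 2 = 1 := by
    rw [← pow_mul, mul_comm, pow_mul, neg_one_sq, one_pow]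
  rw [betaCoeff_succ_eq_legendre hkm, legendre_iterate_derivative_eval_neg_one, ← add_assoc,
    pow_succ]
  push_cast
  simp only [mul_neg_one, neg_neg, mul_one]
  linear_combination (((derivative^[k] (legendre m)).eval 1 : ℝ) : ℂ) *
    Complex.exp (-(Complex.I * l)) / (Complex.I * l) ^ (k + 1) * hsign
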